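/- Let p ≥ 1, n ≥ 1, γ > 0, y_1,…,y_n ∈ ℝ^p, and let w_1,…,w_n > 0 be positive weights. For symmetric positive definite p×p matrices Ω and Ω', define s_i = w_i f(y_i|Ω')^γ / Σ_{j=1}^n w_j f(y_j|Ω')^γ for i = 1,…,n. Then the weighted negative γ-log-likelihood admits the majorization −(1/γ) log((1/n) Σ_{i=1}^n w_i f(y_i|Ω)^γ) ≤ −(1/γ) log((1/n) Σ_{i=1}^n w_i f(y_i|Ω')^γ) + (1/2)(log|Ω'| − log|Ω|) + (1/2) Σ_{i=1}^n s_i y_iᵀ(Ω − Ω')y_i, with equality when Ω = Ω'. -/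

import Mathlib

open MeasureTheory Matrix Filter Topology

/-- The `N_p(0, Ω⁻¹)` density `f(y|Ω) = (2π)^{−p/2} |Ω|^{1/2} exp(−yᵀΩy/2)`. -/
noncomputable def gaussDens {p : ℕ} (Ω : Matrix (Fin p) (Fin p) ℝ) (y : Fin p → ℝ) : ℝ :=
  (2 * Real.pi) ^ (-(p : ℝ) / 2) * Ω.det ^ (1 / 2 : ℝ) * Real.exp (-(y ⬝ᵥ (Ω *ᵥ y)) / 2)

lemma gaussDens_pos {p : ℕ} {Ω : Matrix (Fin p) (Fin p) ℝ} (hΩ : Ω.PosDef) (y : Fin p → ℝ) :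
    0 < gaussDens Ω y :=
  mul_pos (mul_pos (Real.rpow_pos_of_pos (by positivity) _)
    (Real.rpow_pos_of_pos hΩ.det_pos _)) (Real.exp_pos _)

lemma log_gaussDens {p : ℕ} {Ω : Matrix (Fin p) (Fin p) ℝ} (hΩ : Ω.PosDef) (y : Fin p → ℝ) :
    Real.log (gaussDens Ω y) =
      Real.log ((2 * Real.pi) ^ (-(p : ℝ) / 2)) + (1 / 2) * Real.log Ω.det
        + (-(y ⬝ᵥ (Ω *ᵥ y)) / 2) := by
  rw [gaussDens, Real.log_mul (mul_ne_zero (Real.rpow_pos_of_pos (by positivity) _).ne'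
      (Real.rpow_pos_of_pos hΩ.det_pos _).ne') (Real.exp_pos _).ne',
    Real.log_mul (Real.rpow_pos_of_pos (by positivity) _).ne'
      (Real.rpow_pos_of_pos hΩ.det_pos _).ne',
    Real.log_rpow hΩ.det_pos, Real.log_exp]

lemma jensen_log {n : ℕ} (hn : 1 ≤ n) (a b : Fin n → ℝ) (ha : ∀ i, 0 < a i)
    (hb : ∀ i, 0 < b i) :
    ∑ i, (b i / ∑ j, b j) * Real.log (a i / b i) ≤
      Real.log (∑ i, a i) - Real.log (∑ i, b i) := by
  have : Nonempty (Fin n) := Fin.pos_iff_nonempty.mp hn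
  have hA : 0 < ∑ i, a i := Finset.sum_pos (fun i _ => ha i) Finset.univ_nonempty
  have hB : 0 < ∑ i, b i := Finset.sum_pos (fun i _ => hb i) Finset.univ_nonempty
  set A := ∑ i, a i with hA'
  set B := ∑ i, b i with hB'
  have key : ∀ i ∈ Finset.univ, (b i / B) * Real.log (a i / b i) ≤
      a i / A - b i / B + (b i / B) * (Real.log A - Real.log B) := by
    intro i _
    have hx : 0 < a i * B / (b i * A) := div_pos (mul_pos (ha i) hB) (mul_pos (hb i) hA)
    have h1 := Real.log_le_sub_one_of_pos hx
    have hlog : Real.log (a i * B / (b i * A)) =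
        Real.log (a i / b i) - (Real.log A - Real.log B) := by
      rw [Real.log_div (mul_pos (ha i) hB).ne' (mul_pos (hb i) hA).ne', Real.log_mul (ha i).ne' hB.ne',
        Real.log_mul (hb i).ne' hA.ne', Real.log_div (ha i).ne' (hb i).ne']
      ring
    rw [hlog] at h1
    have h2 : (b i / B) * (Real.log (a i / b i) - (Real.log A - Real.log B)) ≤
        (b i / B) * (a i * B / (b i * A) - 1) :=
      mul_le_mul_of_nonneg_left h1 (div_pos (hb i) hB).le
    have h3 : (b i / B) * (a i * B / (b i * A) - 1) = a i / A - b i / B := by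
      field_simp [(hb i).ne', hA.ne', hB.ne']
    rw [h3, mul_sub] at h2
    linarith
  have hsum := Finset.sum_le_sum key
  have heq : ∑ i, (a i / A - b i / B + (b i / B) * (Real.log A - Real.log B)) =
      Real.log A - Real.log B := by
    simp only [Finset.sum_add_distrib, Finset.sum_sub_distrib, ← Finset.sum_div,
      ← Finset.sum_mul, ← hA', ← hB', div_self hA.ne', div_self hB.ne']
    ring
  linarith [hsum, heq.le, heq.ge]

/-- Majorization of the weighted negative γ-log-likelihood used in the MM algorithm,
with equality at `Ω = Ω'`. -/
theorem stmt16 (p n : ℕ) (hp : 1 ≤ p) (hn : 1 ≤ n) (γ : ℝ) (hγ : 0 < γ)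
    (y : Fin n → (Fin p → ℝ)) (w : Fin n → ℝ) (hw : ∀ i, 0 < w i)
    (Ω Ω' : Matrix (Fin p) (Fin p) ℝ) (hΩ : Ω.PosDef) (hΩ' : Ω'.PosDef) :
    (-(1 / γ) * Real.log ((1 / (n : ℝ)) * ∑ i : Fin n, w i * gaussDens Ω (y i) ^ γ) ≤
        -(1 / γ) * Real.log ((1 / (n : ℝ)) * ∑ i : Fin n, w i * gaussDens Ω' (y i) ^ γ) +
          (1 / 2) * (Real.log Ω'.det - Real.log Ω.det) +
          (1 / 2) * ∑ i : Fin n,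
            (w i * gaussDens Ω' (y i) ^ γ / ∑ j : Fin n, w j * gaussDens Ω' (y j) ^ γ) *
              (y i ⬝ᵥ ((Ω - Ω') *ᵥ y i))) ∧
    (Ω = Ω' →
      -(1 / γ) * Real.log ((1 / (n : ℝ)) * ∑ i : Fin n, w i * gaussDens Ω (y i) ^ γ) =
        -(1 / γ) * Real.log ((1 / (n : ℝ)) * ∑ i : Fin n, w i * gaussDens Ω' (y i) ^ γ) +
          (1 / 2) * (Real.log Ω'.det - Real.log Ω.det) +
          (1 / 2) * ∑ i : Fin n,
            (w i * gaussDens Ω' (y i) ^ γ / ∑ j : Fin n, w j * gaussDens Ω' (y j) ^ γ) *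
              (y i ⬝ᵥ ((Ω - Ω') *ᵥ y i))) := by
  have hnem : Nonempty (Fin n) := Fin.pos_iff_nonempty.mp hn
  constructor
  · -- inequality
    have ha : ∀ i, 0 < w i * gaussDens Ω (y i) ^ γ := fun i =>
      mul_pos (hw i) (Real.rpow_pos_of_pos (gaussDens_pos hΩ _) _)
    have hb : ∀ i, 0 < w i * gaussDens Ω' (y i) ^ γ := fun i =>
      mul_pos (hw i) (Real.rpow_pos_of_pos (gaussDens_pos hΩ' _) _)
    have hA : 0 < ∑ i, w i * gaussDens Ω (y i) ^ γ :=
      Finset.sum_pos (fun i _ => ha i) Finset.univ_nonempty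
    have hB : 0 < ∑ i, w i * gaussDens Ω' (y i) ^ γ :=
      Finset.sum_pos (fun i _ => hb i) Finset.univ_nonempty
    have H1 := jensen_log hn _ _ ha hb
    -- rewrite each log term
    have hlogab : ∀ i, Real.log ((w i * gaussDens Ω (y i) ^ γ) / (w i * gaussDens Ω' (y i) ^ γ))
        = γ * ((1 / 2) * (Real.log Ω.det - Real.log Ω'.det)
            - (1 / 2) * (y i ⬝ᵥ ((Ω - Ω') *ᵥ (y i)))) := by
      intro i
      have hq : y i ⬝ᵥ ((Ω - Ω') *ᵥ (y i)) = y i ⬝ᵥ (Ω *ᵥ y i) - y i ⬝ᵥ (Ω' *ᵥ y i) := by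
        rw [Matrix.sub_mulVec, dotProduct_sub]
      rw [Real.log_div (ha i).ne' (hb i).ne',
        Real.log_mul (hw i).ne' (Real.rpow_pos_of_pos (gaussDens_pos hΩ _) _).ne',
        Real.log_mul (hw i).ne' (Real.rpow_pos_of_pos (gaussDens_pos hΩ' _) _).ne',
        Real.log_rpow (gaussDens_pos hΩ _), Real.log_rpow (gaussDens_pos hΩ' _),
        log_gaussDens hΩ, log_gaussDens hΩ', hq]
      ring
    have H2 : ∑ i, ((w i * gaussDens Ω' (y i) ^ γ) / ∑ j, w j * gaussDens Ω' (y j) ^ γ) *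
          Real.log ((w i * gaussDens Ω (y i) ^ γ) / (w i * gaussDens Ω' (y i) ^ γ))
        = γ * ((1 / 2) * (Real.log Ω.det - Real.log Ω'.det))
            * (∑ i, (w i * gaussDens Ω' (y i) ^ γ) / ∑ j, w j * gaussDens Ω' (y j) ^ γ)
          - (γ / 2) * ∑ i : Fin n,
            (w i * gaussDens Ω' (y i) ^ γ / ∑ j : Fin n, w j * gaussDens Ω' (y j) ^ γ) *
              (y i ⬝ᵥ ((Ω - Ω') *ᵥ y i)) := by
      rw [Finset.mul_sum, Finset.mul_sum, ← Finset.sum_sub_distrib]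
      refine Finset.sum_congr rfl fun i _ => ?_
      rw [hlogab i]
      ring
    have hs1 : (∑ i, (w i * gaussDens Ω' (y i) ^ γ) / ∑ j, w j * gaussDens Ω' (y j) ^ γ) = 1 := by
      rw [← Finset.sum_div, div_self hB.ne']
    rw [H2, hs1, mul_one] at H1
    have hlogA : Real.log ((1 / (n : ℝ)) * ∑ i : Fin n, w i * gaussDens Ω (y i) ^ γ)
        = Real.log (1 / (n : ℝ)) + Real.log (∑ i : Fin n, w i * gaussDens Ω (y i) ^ γ) :=
      Real.log_mul (by positivity) hA.ne'
    have hlogB : Real.log ((1 / (n : ℝ)) * ∑ i : Fin n, w i * gaussDens Ω' (y i) ^ γ)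
        = Real.log (1 / (n : ℝ)) + Real.log (∑ i : Fin n, w i * gaussDens Ω' (y i) ^ γ) :=
      Real.log_mul (by positivity) hB.ne'
    rw [hlogA, hlogB]
    -- now conclude
    have hγ' : 0 < 1 / γ := by positivity
    have H3 := mul_le_mul_of_nonneg_left H1 hγ'.le
    have hid : (1 / γ) * (γ * ((1 / 2) * (Real.log Ω.det - Real.log Ω'.det))
          - (γ / 2) * ∑ i : Fin n,
            (w i * gaussDens Ω' (y i) ^ γ / ∑ j : Fin n, w j * gaussDens Ω' (y j) ^ γ) *
              (y i ⬝ᵥ ((Ω - Ω') *ᵥ y i)))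
        = (1 / 2) * (Real.log Ω.det - Real.log Ω'.det)
          - (1 / 2) * ∑ i : Fin n,
            (w i * gaussDens Ω' (y i) ^ γ / ∑ j : Fin n, w j * gaussDens Ω' (y j) ^ γ) *
              (y i ⬝ᵥ ((Ω - Ω') *ᵥ y i)) := by
      field_simp
    rw [hid, mul_sub] at H3
    nlinarith [H3]
  · -- equality at Ω = Ω'
    intro h
    subst h
    simp [Matrix.sub_mulVec]
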